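/- Let l be a prime, g ≥ 2, p ≥ 2 with l ≥ g(p-1)+1, and let Σ ⊂ F_l^{2g} satisfy |Σ| ≤ l^{2g-2}g(p-1). Then there exist α, β ∈ F_l^{2g} such that: α ≠ 0; β lies in the symplectic orthogonal of α but not in the line spanned by α; no nonzero multiple of α lies in Σ; and none of the points β + iα for i = 0,…,l-1 lies in Σ. -/

import Mathlib

/-!
Double counting over ordered bases `(u, v)` of isotropic planes of a nondegenerate alternating
form on an `n`-dimensional space over a field with `q` elements: there are
`(q ^ n - 1) (q ^ (n - 1) - q)` of them, and a fixed nonzero vector lies in the span of at most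
`(q ^ 2 - 1) (q ^ (n - 1) - q)` of them. So if `#S (q + 1) < q ^ n - 1`, some isotropic plane `P`
contains at most `q - 2` nonzero points of `S`. These points have at most `(q - 2)(q - 1)`
nonzero multiples, fewer than the `q ^ 2 - 1` nonzero vectors of `P`, which gives `α`; and they
meet at most `q - 2` of the `q - 1` lines `β + K α ⊆ P` with `β ∉ K α`, which gives `β`.
For `F_l^{2g}` the bound on `|Σ|` yields `#S (l + 1) ≤ l ^ (2g) - l ^ (2g - 2) < l ^ (2g) - 1`.
-/

/-- The standard symplectic form on `F_l^g × F_l^g`. -/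
def stdSymplForm (l g : ℕ) (a b : (Fin g → ZMod l) × (Fin g → ZMod l)) : ZMod l :=
  (∑ i, a.1 i * b.2 i) - (∑ i, b.1 i * a.2 i)

open Finset Module Submodule
open LinearMap (BilinForm ker mem_ker)
open scoped Classical

section LinearAlgebra

variable {K V : Type*} [Field K] [AddCommGroup V] [Module K V]

theorem finrank_span_pair {u v : V} (hu : u ≠ 0) (hv : v ∉ K ∙ u) :
    finrank K (span K {u, v}) = 2 := by
  have hind : LinearIndependent K ![u, v] :=
    (LinearIndependent.pair_iff' hu).2 fun a h ↦ hv (mem_span_singleton.2 ⟨a, h⟩)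
  rw [← Matrix.range_cons_cons_empty u v ![], finrank_span_eq_card hind, Fintype.card_fin]

theorem BilinForm.apply_eq_zero_of_mem_span_pair {B : BilinForm K V} (hB : B.IsAlt) {u v x y : V}
    (huv : B u v = 0) (hx : x ∈ span K {u, v}) (hy : y ∈ span K {u, v}) : B x y = 0 := by
  obtain ⟨a, b, rfl⟩ := mem_span_pair.1 hx
  obtain ⟨c, d, rfl⟩ := mem_span_pair.1 hy
  simp [hB u, hB v, huv, hB.isRefl _ _ huv]

variable [Fintype K] [Fintype V]

theorem card_filter_mem_submodule (W : Submodule K V) :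
    #{v | v ∈ W} = Fintype.card K ^ finrank K W := by
  rw [← Fintype.card_subtype, ← card_eq_pow_finrank]

theorem card_filter_mem_and_notMem {U W : Submodule K V} (hUW : U ≤ W) :
    #{v | v ∈ W ∧ v ∉ U} = Fintype.card K ^ finrank K W - Fintype.card K ^ finrank K U := by
  rw [← card_filter_mem_submodule, ← card_filter_mem_submodule, filter_and_not,
    card_sdiff_of_subset (monotone_filter_right _ fun _ _ h ↦ hUW h)]

theorem exists_ne_zero_forall_smul_notMem {W : Submodule K V} {T : Finset V}
    (hT : #T * (Fintype.card K - 1) < Fintype.card K ^ finrank K W - 1) :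
    ∃ α ∈ W, α ≠ 0 ∧ ∀ c : K, c ≠ 0 → c • α ∉ T := by
  set bad := (T ×ˢ univ.erase (0 : K)).image fun x ↦ x.2⁻¹ • x.1
  have hbad : #bad < #{v | v ∈ W ∧ v ∉ (⊥ : Submodule K V)} := by
    rw [card_filter_mem_and_notMem bot_le, finrank_bot, pow_zero]
    calc #bad ≤ #(T ×ˢ univ.erase (0 : K)) := card_image_le
      _ = #T * (Fintype.card K - 1) := by
        rw [card_product, card_erase_of_mem (mem_univ _), card_univ]
      _ < _ := hT
  obtain ⟨α, hαW, hαbad⟩ := exists_mem_notMem_of_card_lt_card hbad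
  simp only [mem_filter, mem_univ, true_and, mem_bot] at hαW
  refine ⟨α, hαW.1, hαW.2, fun c hc hcα ↦ hαbad (mem_image.2 ⟨(c • α, c), ?_, ?_⟩)⟩
  · simpa [hcα] using hc
  · simp [smul_smul, hc]

theorem exists_notMem_span_forall_add_smul_notMem {W : Submodule K V} {α : V} (hα : α ∈ W)
    (hα0 : α ≠ 0) {T : Finset V}
    (hT : #T * Fintype.card K < Fintype.card K ^ finrank K W - Fintype.card K) :
    ∃ β ∈ W, β ∉ K ∙ α ∧ ∀ i : K, β + i • α ∉ T := by
  set bad := (T ×ˢ (univ : Finset K)).image fun x ↦ x.1 - x.2 • α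
  have hbad : #bad < #{v | v ∈ W ∧ v ∉ K ∙ α} := by
    rw [card_filter_mem_and_notMem ((span_singleton_le_iff_mem _ _).2 hα),
      finrank_span_singleton hα0, pow_one]
    calc #bad ≤ #(T ×ˢ (univ : Finset K)) := card_image_le
      _ = #T * Fintype.card K := by rw [card_product, card_univ]
      _ < _ := hT
  obtain ⟨β, hβW, hβbad⟩ := exists_mem_notMem_of_card_lt_card hbad
  simp only [mem_filter, mem_univ, true_and] at hβW
  exact ⟨β, hβW.1, hβW.2, fun i hi ↦
    hβbad (mem_image.2 ⟨(β + i • α, i), by simpa using hi, by simp⟩)⟩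

theorem exists_pair_mem_of_finrank_eq_two {W : Submodule K V} (hW : finrank K W = 2)
    {S : Finset V} (hS : #{s ∈ S | s ∈ W ∧ s ≠ 0} + 2 ≤ Fintype.card K) :
    ∃ α ∈ W, ∃ β ∈ W, α ≠ 0 ∧ β ∉ K ∙ α ∧ (∀ c : K, c ≠ 0 → c • α ∉ S) ∧
      ∀ i : K, β + i • α ∉ S := by
  set T := ({s ∈ S | s ∈ W ∧ s ≠ 0} : Finset V)
  have hmemT {s : V} (hs : s ∈ S) (hsW : s ∈ W) (hs0 : s ≠ 0) : s ∈ T := by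
    simp [T, hs, hsW, hs0]
  obtain ⟨k, hk⟩ := Nat.exists_eq_add_of_le (le_of_add_le_right hS)
  have hTk : #T ≤ k := by omega
  obtain ⟨α, hαW, hα0, hα⟩ := exists_ne_zero_forall_smul_notMem (W := W) (T := T) (by
    rw [hW, hk, show 2 + k - 1 = k + 1 by omega]
    have : (2 + k) ^ 2 = k * (k + 1) + (3 * k + 4) := by ring
    have := Nat.mul_le_mul_right (k + 1) hTk
    omega)
  obtain ⟨β, hβW, hβα, hβ⟩ := exists_notMem_span_forall_add_smul_notMem hαW hα0 (T := T) (by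
    rw [hW, hk]
    have : (2 + k) ^ 2 = k * (2 + k) + 2 * (2 + k) := by ring
    have := Nat.mul_le_mul_right (2 + k) hTk
    omega)
  refine ⟨α, hαW, β, hβW, hα0, hβα, fun c hc hcS ↦ ?_, fun i hiS ↦ ?_⟩
  · exact hα c hc (hmemT hcS (W.smul_mem c hαW) (smul_ne_zero hc hα0))
  · refine hβ i (hmemT hiS (W.add_mem hβW (W.smul_mem i hαW)) fun h ↦ hβα ?_)
    rw [eq_neg_of_add_eq_zero_left h]
    exact neg_mem (smul_mem _ _ (mem_span_singleton_self α))

end LinearAlgebra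

section IsotropicPairs

variable {K V : Type*} [Field K] [AddCommGroup V] [Module K V] [Fintype V] {B : BilinForm K V}

noncomputable def isotropicPairs (B : BilinForm K V) : Finset (V × V) :=
  {p | p.1 ≠ 0 ∧ B p.1 p.2 = 0 ∧ p.2 ∉ K ∙ p.1}

theorem card_filter_isotropicPairs_smul_add_smul_eq_le (hB : B.IsAlt) {t : V} {a b : K}
    (hab : (a, b) ≠ 0) :
    #{p ∈ isotropicPairs B | a • p.1 + b • p.2 = t} ≤ #{w | B t w = 0 ∧ w ∉ K ∙ t} := by
  -- `p = (u, v)` is recovered from its image: `u = a⁻¹ • t` if `b = 0`,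
  -- else `v = b⁻¹ • (t - a • u)`.
  apply card_le_card_of_injOn (fun p ↦ if b = 0 then p.2 else p.1)
  · rintro ⟨u, v⟩ hp
    simp only [isotropicPairs, coe_filter, mem_filter, mem_univ, true_and,
      Set.mem_ofPred_eq] at hp ⊢
    obtain ⟨⟨hu, huv, hv⟩, rfl⟩ := hp
    split_ifs with hb
    · subst hb
      refine ⟨by simp [huv], fun hvt ↦ hv ?_⟩
      exact span_singleton_le_iff_mem _ _ |>.2
        (by simpa using smul_mem _ a (mem_span_singleton_self u)) hvt
    · refine ⟨by simp [hB u, hB.isRefl _ _ huv], fun hut ↦ hv ?_⟩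
      obtain ⟨c, hc⟩ := mem_span_singleton.1 hut
      have hc0 : c ≠ 0 := by rintro rfl; exact hu (by simpa using hc.symm)
      have htu : a • u + b • v ∈ K ∙ u := by
        rw [← inv_smul_smul₀ hc0 (a • u + b • v), hc]
        exact smul_mem _ _ (mem_span_singleton_self u)
      rwa [add_mem_cancel_left (smul_mem _ _ (mem_span_singleton_self u)),
        smul_mem_iff _ hb] at htu
  · rintro ⟨u, v⟩ hp ⟨u', v'⟩ hp' heq
    simp only [isotropicPairs, coe_filter, mem_filter, mem_univ, true_and,
      Set.mem_ofPred_eq] at hp hp' heq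
    split_ifs at heq with hb
    · subst hb heq
      have ha : a ≠ 0 := by rintro rfl; exact hab rfl
      simpa [ha] using hp.2.trans hp'.2.symm
    · subst heq
      simpa [hb] using hp.2.trans hp'.2.symm

variable [Fintype K]

theorem card_filter_apply_eq_zero_and_notMem_span (hB : B.IsAlt) (hsep : B.SeparatingLeft)
    {t : V} (ht : t ≠ 0) :
    #{w | B t w = 0 ∧ w ∉ K ∙ t} = Fintype.card K ^ (finrank K V - 1) - Fintype.card K := by
  have hBt : B t ≠ 0 := fun h ↦ ht (hsep t fun w ↦ by simp [h])
  have hrank := Module.Dual.finrank_ker_add_one_of_ne_zero hBt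
  have hle : K ∙ t ≤ ker (B t) := (span_singleton_le_iff_mem _ _).2 (hB t)
  simpa only [mem_ker, finrank_span_singleton ht, pow_one, ← hrank, Nat.add_sub_cancel] using
    card_filter_mem_and_notMem hle

theorem card_isotropicPairs (hB : B.IsAlt) (hsep : B.SeparatingLeft) :
    #(isotropicPairs B) = (Fintype.card K ^ finrank K V - 1) *
      (Fintype.card K ^ (finrank K V - 1) - Fintype.card K) := by
  have hfiber (u : V) : #{v | u ≠ 0 ∧ B u v = 0 ∧ v ∉ K ∙ u} =
      if u ≠ 0 then Fintype.card K ^ (finrank K V - 1) - Fintype.card K else 0 := by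
    split_ifs with hu
    · simpa [hu] using card_filter_apply_eq_zero_and_notMem_span hB hsep hu
    · simp [hu]
  rw [isotropicPairs, card_filter, Fintype.sum_prod_type]
  simp only [← card_filter, hfiber]
  rw [sum_ite, sum_const_zero, add_zero, sum_const, smul_eq_mul, filter_ne',
    card_erase_of_mem (mem_univ _), card_univ, card_eq_pow_finrank (K := K)]

theorem card_filter_isotropicPairs_mem_span_le (hB : B.IsAlt) (hsep : B.SeparatingLeft)
    {t : V} (ht : t ≠ 0) :
    #{p ∈ isotropicPairs B | t ∈ span K {p.1, p.2}} ≤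
      (Fintype.card K ^ 2 - 1) * (Fintype.card K ^ (finrank K V - 1) - Fintype.card K) := by
  calc #{p ∈ isotropicPairs B | t ∈ span K {p.1, p.2}}
      ≤ #((univ.erase (0 : K × K)).biUnion fun ab ↦
          {p ∈ isotropicPairs B | ab.1 • p.1 + ab.2 • p.2 = t}) := by
        refine card_le_card fun p hp ↦ ?_
        obtain ⟨hpG, hpt⟩ := mem_filter.1 hp
        obtain ⟨a, b, hab⟩ := mem_span_pair.1 hpt
        refine mem_biUnion.2
          ⟨(a, b), mem_erase.2 ⟨fun h ↦ ht ?_, mem_univ _⟩, mem_filter.2 ⟨hpG, hab⟩⟩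
        simp only [Prod.mk_eq_zero] at h
        simp [← hab, h.1, h.2]
    _ ≤ ∑ ab ∈ univ.erase (0 : K × K), #{p ∈ isotropicPairs B | ab.1 • p.1 + ab.2 • p.2 = t} :=
        card_biUnion_le
    _ ≤ #(univ.erase (0 : K × K)) * (Fintype.card K ^ (finrank K V - 1) - Fintype.card K) := by
        refine sum_le_card_nsmul _ _ _ fun ab hab ↦ ?_
        rw [← card_filter_apply_eq_zero_and_notMem_span hB hsep ht]
        exact card_filter_isotropicPairs_smul_add_smul_eq_le hB (mem_erase.1 hab).1
    _ = _ := by rw [card_erase_of_mem (mem_univ _), card_univ, Fintype.card_prod, sq]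

theorem exists_mem_isotropicPairs_card_filter_mem_span_add_two_le (hB : B.IsAlt)
    (hsep : B.SeparatingLeft) (hn : 3 ≤ finrank K V) (S : Finset V)
    (hS : #S * (Fintype.card K + 1) < Fintype.card K ^ finrank K V - 1) :
    ∃ p ∈ isotropicPairs B, #{s ∈ S | s ∈ span K {p.1, p.2} ∧ s ≠ 0} + 2 ≤ Fintype.card K := by
  set q := Fintype.card K
  set h := q ^ (finrank K V - 1) - q
  have hq : 1 < q := Fintype.one_lt_card
  have hh : 0 < h := Nat.sub_pos_of_lt <| by
    simpa using Nat.pow_lt_pow_right hq (show 1 < finrank K V - 1 by omega)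
  set cnt := fun p : V × V ↦ #{s ∈ S | s ∈ span K {p.1, p.2} ∧ s ≠ 0}
  have hswap : ∑ p ∈ isotropicPairs B, cnt p =
      ∑ s ∈ S, #{p ∈ isotropicPairs B | s ∈ span K {p.1, p.2} ∧ s ≠ 0} := by
    simp only [cnt, card_filter]
    exact sum_comm
  have hsum : ∑ p ∈ isotropicPairs B, cnt p ≤ #S * ((q ^ 2 - 1) * h) := by
    rw [hswap]
    refine sum_le_card_nsmul _ _ _ fun s _ ↦ ?_
    by_cases hs : s = 0
    · simp [hs]
    · simpa [hs] using card_filter_isotropicPairs_mem_span_le hB hsep hs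
  obtain ⟨p, hp, hlt⟩ := exists_lt_of_sum_lt (f := cnt) (g := fun _ ↦ q - 1) <| by
    rw [sum_const, card_isotropicPairs hB hsep, smul_eq_mul]
    refine hsum.trans_lt ?_
    calc #S * ((q ^ 2 - 1) * h) = #S * (q + 1) * ((q - 1) * h) := by
          rw [show q ^ 2 - 1 = (q + 1) * (q - 1) by rw [← Nat.sq_sub_sq, one_pow]]; ring
      _ < (q ^ finrank K V - 1) * ((q - 1) * h) :=
          Nat.mul_lt_mul_of_pos_right hS (Nat.mul_pos (by omega) hh)
      _ = (q ^ finrank K V - 1) * h * (q - 1) := by ring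
  exact ⟨p, hp, by simp only [cnt] at hlt; omega⟩

theorem exists_isotropic_pair_avoiding (hB : B.IsAlt) (hsep : B.SeparatingLeft)
    (hn : 3 ≤ finrank K V) (S : Finset V)
    (hS : #S * (Fintype.card K + 1) < Fintype.card K ^ finrank K V - 1) :
    ∃ α β : V, α ≠ 0 ∧ B α β = 0 ∧ β ∉ K ∙ α ∧ (∀ c : K, c ≠ 0 → c • α ∉ S) ∧
      ∀ i : K, β + i • α ∉ S := by
  obtain ⟨⟨u, v⟩, hp, hcard⟩ :=
    exists_mem_isotropicPairs_card_filter_mem_span_add_two_le hB hsep hn S hS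
  obtain ⟨hu, huv, hv⟩ : u ≠ 0 ∧ B u v = 0 ∧ v ∉ K ∙ u := by simpa [isotropicPairs] using hp
  obtain ⟨α, hα, β, hβ, hα0, hβα, hαS, hβS⟩ :=
    exists_pair_mem_of_finrank_eq_two (finrank_span_pair hu hv) hcard
  exact ⟨α, β, hα0, BilinForm.apply_eq_zero_of_mem_span_pair hB huv hα hβ, hβα, hαS, hβS⟩

end IsotropicPairs

section StdSympl

variable (l g : ℕ)

def stdSymplBilin : BilinForm (ZMod l) ((Fin g → ZMod l) × (Fin g → ZMod l)) :=
  LinearMap.mk₂ (ZMod l) (stdSymplForm l g)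
    (fun _ _ _ ↦ by simp only [stdSymplForm, Prod.fst_add, Prod.snd_add, Pi.add_apply, add_mul,
      mul_add, sum_add_distrib]; ring)
    (fun _ _ _ ↦ by simp only [stdSymplForm, Prod.smul_fst, Prod.smul_snd, Pi.smul_apply,
      smul_eq_mul, mul_sub, mul_sum, mul_assoc, mul_left_comm])
    (fun _ _ _ ↦ by simp only [stdSymplForm, Prod.fst_add, Prod.snd_add, Pi.add_apply, add_mul,
      mul_add, sum_add_distrib]; ring)
    (fun _ _ _ ↦ by simp only [stdSymplForm, Prod.smul_fst, Prod.smul_snd, Pi.smul_apply,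
      smul_eq_mul, mul_sub, mul_sum, mul_assoc, mul_left_comm])

@[simp]
theorem stdSymplBilin_apply (a b : (Fin g → ZMod l) × (Fin g → ZMod l)) :
    stdSymplBilin l g a b = stdSymplForm l g a b := rfl

theorem stdSymplBilin_isAlt : (stdSymplBilin l g).IsAlt := fun _ ↦ sub_self _

theorem stdSymplBilin_separatingLeft : (stdSymplBilin l g).SeparatingLeft := by
  intro a ha
  ext i
  · simpa [stdSymplForm, Pi.single_apply] using ha (0, Pi.single i 1)
  · simpa [stdSymplForm, Pi.single_apply] using ha (Pi.single i 1, 0)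

end StdSympl

theorem card_mul_succ_lt_pow_sub_one {l g N : ℕ} (hl : 2 ≤ l) (hg : 2 ≤ g)
    (hN : N ≤ l ^ (2 * g - 2) * (l - 1)) : N * (l + 1) < l ^ (2 * g) - 1 := by
  have hm : l ≤ l ^ (2 * g - 2) := Nat.le_self_pow (by omega) l
  have hle : l ^ (2 * g - 2) ≤ l ^ (2 * g) := Nat.pow_le_pow_right (by omega) (by omega)
  have hpow : l ^ (2 * g) = l ^ (2 * g - 2) * l ^ 2 := by rw [← pow_add]; congr 1; omega
  calc N * (l + 1) ≤ l ^ (2 * g - 2) * ((l + 1) * (l - 1)) := by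
        rw [mul_comm (l + 1), ← mul_assoc]; exact Nat.mul_le_mul_right _ hN
    _ = l ^ (2 * g) - l ^ (2 * g - 2) := by
        rw [← Nat.sq_sub_sq, one_pow, Nat.mul_sub_one, hpow]
    _ < l ^ (2 * g) - 1 := by omega

theorem exists_good_pair_general (l g p : ℕ) [Fact (Nat.Prime l)]
    (hg : 2 ≤ g) (hl : g * (p - 1) + 1 ≤ l)
    (S : Finset ((Fin g → ZMod l) × (Fin g → ZMod l)))
    (hS : S.card ≤ l ^ (2 * g - 2) * g * (p - 1)) :
    ∃ α β : (Fin g → ZMod l) × (Fin g → ZMod l),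
      α ≠ 0 ∧
      stdSymplForm l g α β = 0 ∧
      β ∉ Submodule.span (ZMod l) ({α} : Set _) ∧
      (∀ c : ZMod l, c ≠ 0 → c • α ∉ S) ∧
      (∀ i : ZMod l, β + i • α ∉ S) := by
  have hrank : finrank (ZMod l) ((Fin g → ZMod l) × (Fin g → ZMod l)) = 2 * g := by
    simp [finrank_prod, two_mul]
  have hSl : #S ≤ l ^ (2 * g - 2) * (l - 1) := hS.trans <| by
    rw [mul_assoc]; exact Nat.mul_le_mul_left _ (by omega)
  have hcard : #S * (l + 1) < l ^ (2 * g) - 1 :=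
    card_mul_succ_lt_pow_sub_one (Fact.out : l.Prime).two_le hg hSl
  simpa using exists_isotropic_pair_avoiding (stdSymplBilin_isAlt l g)
    (stdSymplBilin_separatingLeft l g) (by omega) S (by rwa [ZMod.card, hrank])

/-- Lemma 4.3 of the paper, in additive notation. Let `l` be a prime,
`g ≥ 2`, `p ≥ 2` with `l ≥ g(p-1)+1`, and `Σ ⊂ F_l^{2g}` with
`|Σ| ≤ l^{2g-2} g (p-1)`. Then there exist `α ≠ 0` and `β` in the symplectic
orthogonal of `α` but not on the line spanned by `α`, such that no nonzero
multiple of `α` lies in `Σ` and no point `β + iα` (`i = 0,…,l-1`) lies in `Σ`. -/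
theorem exists_good_pair (l g p : ℕ) [Fact (Nat.Prime l)]
    (hg : 2 ≤ g) (hp : 2 ≤ p) (hl : g * (p - 1) + 1 ≤ l)
    (S : Finset ((Fin g → ZMod l) × (Fin g → ZMod l)))
    (hS : S.card ≤ l ^ (2 * g - 2) * g * (p - 1)) :
    ∃ α β : (Fin g → ZMod l) × (Fin g → ZMod l),
      α ≠ 0 ∧
      stdSymplForm l g α β = 0 ∧
      β ∉ Submodule.span (ZMod l) ({α} : Set _) ∧
      (∀ c : ZMod l, c ≠ 0 → c • α ∉ S) ∧
      (∀ i : ZMod l, β + i • α ∉ S) :=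
  exists_good_pair_general l g p hg hl S hS
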